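/- Let K/L be an extension of H-graded fields with e_{K/L} = 1 (i.e., ρ(K^×) = ρ(L^×)) and f = [K₁:L₁] finite, let R be a graded valuation ring of L, and let A₁ be a valuation ring of K₁ extending R₁ = R ∩ L₁ (with local inclusion). Set N = f!. Then the set A of elements of K all of whose homogeneous components y (of degree h) satisfy y^N ∈ A₁^× · R_{h^N} is a graded valuation ring of K with A ∩ L = R and A ∩ K₁ = A₁, and it is the unique such extension of R with identity component A₁. -/

import Mathlib

open scoped DirectSum

/-- An `H`-graded field: a nonzero commutative ring with an internal grading by the
commutative group `H` in which every nonzero homogeneous element is invertible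
(with homogeneous inverse). -/
structure GradedField (H : Type*) [CommGroup H] [DecidableEq H] (K : Type*) [CommRing K] where
  comp : H → AddSubgroup K
  one_mem : (1 : K) ∈ comp 1
  mul_mem : ∀ {g h : H} {x y : K}, x ∈ comp g → y ∈ comp h → x * y ∈ comp (g * h)
  isInternal : DirectSum.IsInternal fun h : H => comp h
  zero_ne_one : (0 : K) ≠ 1
  inv_mem : ∀ {h : H} {x : K}, x ∈ comp h → x ≠ 0 → ∃ y ∈ comp h⁻¹, x * y = 1

namespace GradedField

variable {H : Type*} [CommGroup H] [DecidableEq H] {K : Type*} [CommRing K] (F : GradedField H K)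

/-- A homogeneous element. -/
def Homogeneous (x : K) : Prop := ∃ h, x ∈ F.comp h

/-- A subring is graded if each of its elements is a sum of homogeneous elements of the
subring. -/
def IsGradedSubring (R : Subring K) : Prop :=
  ∀ x ∈ R, x ∈ AddSubgroup.closure {y : K | y ∈ R ∧ F.Homogeneous y}

/-- A graded subfield: a graded subring closed under inverses of nonzero homogeneous
elements. -/
structure IsGradedSubfield (L : Subring K) : Prop where
  graded : F.IsGradedSubring L
  inv_mem : ∀ x ∈ L, F.Homogeneous x → x ≠ 0 → Ring.inverse x ∈ L

/-- A graded valuation ring of the graded subfield `L`: a graded subring `R ⊆ L` such that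
every nonzero homogeneous element of `L` lies in `R` or has its inverse in `R`. -/
def IsGradedValRing (L R : Subring K) : Prop :=
  R ≤ L ∧ F.IsGradedSubring R ∧
    ∀ x ∈ L, F.Homogeneous x → x ≠ 0 → (x ∈ R ∨ Ring.inverse x ∈ R)

/-- The identity component `K₁`, as a subring. -/
def oneComponent : Subring K where
  carrier := F.comp 1
  one_mem' := F.one_mem
  mul_mem' := fun ha hb => by simpa using F.mul_mem ha hb
  add_mem' := fun ha hb => (F.comp 1).add_mem ha hb
  zero_mem' := (F.comp 1).zero_mem
  neg_mem' := fun ha => (F.comp 1).neg_mem ha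

theorem mem_oneComponent {x : K} : x ∈ F.oneComponent ↔ x ∈ F.comp 1 := Iff.rfl

/-- The value group `ρ(L^×) ⊆ H` of a graded subfield `L`. -/
def valueGroup (L : Subring K)
    (hL : ∀ x ∈ L, F.Homogeneous x → x ≠ 0 → Ring.inverse x ∈ L) : Subgroup H where
  carrier := {h | ∃ x ∈ F.comp h, x ≠ 0 ∧ x ∈ L}
  one_mem' := ⟨1, F.one_mem, Ne.symm F.zero_ne_one, L.one_mem⟩
  mul_mem' := by
    rintro g h ⟨x, hx, hx0, hxL⟩ ⟨y, hy, hy0, hyL⟩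
    obtain ⟨x', hx', hxx'⟩ := F.inv_mem hx hx0
    obtain ⟨y', hy', hyy'⟩ := F.inv_mem hy hy0
    refine ⟨x * y, F.mul_mem hx hy, ?_, L.mul_mem hxL hyL⟩
    intro h0
    have h1 : x * y * (x' * y') = 1 := by rw [mul_mul_mul_comm, hxx', hyy', one_mul]
    rw [h0, zero_mul] at h1
    exact F.zero_ne_one h1
  inv_mem' := by
    rintro g ⟨x, hx, hx0, hxL⟩
    obtain ⟨y, hy, hxy⟩ := F.inv_mem hx hx0
    have hu : IsUnit x := IsUnit.of_mul_eq_one y hxy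
    have hyx : Ring.inverse x = y := by
      calc Ring.inverse x = Ring.inverse x * (x * y) := by rw [hxy, mul_one]
        _ = Ring.inverse x * x * y := by ring
        _ = y := by rw [Ring.inverse_mul_cancel x hu, one_mul]
    refine ⟨y, hy, ?_, ?_⟩
    · intro h0; rw [h0, mul_zero] at hxy; exact F.zero_ne_one hxy
    · rw [← hyx]; exact hL x hxL ⟨g, hx⟩ hx0

/-- The value group `ρ(K^×)` of the whole graded field. -/
def fullValueGroup : Subgroup H :=
  F.valueGroup ⊤ (fun _ _ _ _ => Subring.mem_top _)

/-- `K₁` as a module over `L₁ = K₁ ∩ L`. -/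
def oneSubmodule (L : Subring K) : Submodule ↥(F.oneComponent ⊓ L) K where
  carrier := F.comp 1
  add_mem' := fun ha hb => (F.comp 1).add_mem ha hb
  zero_mem' := (F.comp 1).zero_mem
  smul_mem' := fun c x hx => by
    have hc : (c : K) ∈ F.comp 1 := ((Subring.mem_inf).mp c.2).1
    have := F.mul_mem hc hx
    simpa [Subring.smul_def] using this

/-- A graded automorphism: a ring automorphism preserving each graded component. -/
def IsGradedAut (σ : RingAut K) : Prop := ∀ (h : H) (x : K), x ∈ F.comp h → σ x ∈ F.comp h

end GradedField

/-- The fixed subring `K^G` of a group of ring automorphisms. -/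
def fixedSubring {K : Type*} [CommRing K] (G : Subgroup (RingAut K)) : Subring K where
  carrier := {x | ∀ σ ∈ G, σ x = x}
  one_mem' := fun σ _ => map_one σ
  mul_mem' := fun ha hb σ hσ => by rw [map_mul, ha σ hσ, hb σ hσ]
  add_mem' := fun ha hb σ hσ => by rw [map_add, ha σ hσ, hb σ hσ]
  zero_mem' := fun σ _ => map_zero σ
  neg_mem' := fun ha σ hσ => by rw [map_neg, ha σ hσ]

theorem mem_fixedSubring {K : Type*} [CommRing K] {G : Subgroup (RingAut K)} {x : K} :
    x ∈ fixedSubring G ↔ ∀ σ ∈ G, σ x = x := Iff.rfl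


namespace GradedField

variable {H : Type*} [CommGroup H] [DecidableEq H] {K : Type*} [CommRing K]
variable (F : GradedField H K)

/-- Decomposition of an element into its homogeneous components. -/
noncomputable def decompose (x : K) : ⨁ h : H, ↥(F.comp h) :=
  (Equiv.ofBijective _ F.isInternal).symm x

/-- The degree-`h` homogeneous component of `x`. -/
noncomputable def component (h : H) (x : K) : K := (F.decompose x h : K)

/-- The inertia subgroup of `G`: graded automorphisms in `G` acting trivially on `K₁`. -/
def inertia (G : Subgroup (RingAut K)) : Subgroup (RingAut K) where
  carrier := {σ | σ ∈ G ∧ ∀ x ∈ F.comp 1, σ x = x}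
  one_mem' := ⟨G.one_mem, fun _ _ => rfl⟩
  mul_mem' := fun {a b} ha hb => ⟨G.mul_mem ha.1 hb.1, fun x hx => by
    show a (b x) = x
    rw [hb.2 x hx, ha.2 x hx]⟩
  inv_mem' := fun {a} ha => ⟨G.inv_mem ha.1, fun x hx => by
    conv_lhs => rw [← ha.2 x hx]
    exact a.symm_apply_apply x⟩

theorem mem_inertia {G : Subgroup (RingAut K)} {σ : RingAut K} :
    σ ∈ F.inertia G ↔ σ ∈ G ∧ ∀ x ∈ F.comp 1, σ x = x := Iff.rfl

end GradedField

/-- A subring `S` containing a subring `L`, viewed as an `L`-submodule of the ambient ring. -/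
def Subring.toSubmoduleOver {K : Type*} [CommRing K] (L S : Subring K) (hLS : L ≤ S) :
    Submodule ↥L K where
  carrier := S
  add_mem' := fun ha hb => S.add_mem ha hb
  zero_mem' := S.zero_mem
  smul_mem' := fun c x hx => S.mul_mem (hLS c.2) hx

section ZR

variable {H : Type*} [CommGroup H] [DecidableEq H] {K : Type*} [CommRing K]

/-- The Zariski–Riemann space of graded valuation rings of `K` containing `k₀`. -/
def GradedField.ZR (F : GradedField H K) (k₀ : Subring K) : Type _ :=
  {O : Subring K // F.IsGradedValRing ⊤ O ∧ k₀ ≤ O}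

/-- The set of homogeneous units (nonzero homogeneous elements) of `K`. -/
def GradedField.HomogUnits (F : GradedField H K) : Type _ :=
  {x : K // x ≠ 0 ∧ F.Homogeneous x}

open Classical in
/-- The embedding of the Zariski–Riemann space into `{0,1}^{K^×}` via characteristic
functions. -/
noncomputable def GradedField.chi (F : GradedField H K) (k₀ : Subring K) (O : F.ZR k₀) :
    F.HomogUnits → Bool :=
  fun x => decide (x.1 ∈ O.1)

/-- Basic open sets `P{F}∖{G}` of the constructible topology, for finite sets `F`, `G` of
homogeneous units. -/
def GradedField.constructibleBasis (F : GradedField H K) (k₀ : Subring K) :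
    Set (Set (F.ZR k₀)) :=
  {s | ∃ Fs Gs : Finset K, (∀ a ∈ Fs, a ≠ 0 ∧ F.Homogeneous a) ∧
    (∀ b ∈ Gs, b ≠ 0 ∧ F.Homogeneous b) ∧
    s = {O : F.ZR k₀ | (∀ a ∈ Fs, a ∈ O.1) ∧ ∀ b ∈ Gs, b ∉ O.1}}

/-- The constructible topology on the Zariski–Riemann space. -/
def GradedField.constructibleTop (F : GradedField H K) (k₀ : Subring K) :
    TopologicalSpace (F.ZR k₀) :=
  TopologicalSpace.generateFrom (F.constructibleBasis k₀)


/-! A nonzero homogeneous `y ∈ K_h` is `c · l` with `c ∈ K₁` and `0 ≠ l ∈ L_h` because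
`e_{K/L} = 1`. Since `1, c, …, c^f` are linearly dependent over `L₁`, two terms of the relation
have the same `B`-value, so `c^d ∈ B^× · L₁` for some `0 < d ≤ f`; hence
`y^{f!} = u · m` with `u ∈ B^×` and `m ∈ L_{h^{f!}}`.

Any graded valuation ring `A` contains `y` as soon as it contains `y^{f!}`
(`y = y^{f!} · (y⁻¹)^{f!-1}` otherwise). So if `A ∩ L = R` and `B ⊆ A`, then `y ∈ A` exactly
when `m ∈ R`, i.e. when `y^{f!} ∈ B^× · R`: this gives uniqueness. That condition is additive
in each degree because, after swapping `y` and `z`, `y + z = y · (1 + z/y)` with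
`1 + z/y ∈ B`, and elements of `B` have their `f!`-th power in `B^× · (B ∩ L) ⊆ B^× · R`. -/

theorem Valuation.exists_ne_map_eq_of_sum_eq_zero {R Γ₀ ι : Type*} [Ring R]
    [LinearOrderedCommGroupWithZero Γ₀] (v : Valuation R Γ₀) {s : Finset ι} {t : ι → R}
    (hsum : ∑ i ∈ s, t i = 0) (hs : ∃ i ∈ s, v (t i) ≠ 0) :
    ∃ i ∈ s, ∃ j ∈ s, i ≠ j ∧ v (t i) ≠ 0 ∧ v (t i) = v (t j) := by
  classical
  obtain ⟨i₀, hi₀, hv₀⟩ := hs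
  obtain ⟨i, hi, hmax⟩ := s.exists_max_image (fun j => v (t j)) ⟨i₀, hi₀⟩
  have hvi : v (t i) ≠ 0 := fun h0 => hv₀ (le_antisymm (h0 ▸ hmax i₀ hi₀) zero_le)
  by_contra! hne
  have hlt : ∀ j ∈ s \ {i}, v (t j) < v (t i) := fun j hj => by
    rw [Finset.mem_sdiff, Finset.mem_singleton] at hj
    exact (hmax j hj.1).lt_of_ne (hne i hi j hj.1 (Ne.symm hj.2) hvi).symm
  have := v.map_sum_eq_of_lt hi hlt
  rw [hsum, map_zero] at this
  exact hvi this.symm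

theorem Valuation.exists_map_pow_factorial_eq_map_algebraMap {k E Γ₀ : Type*} [Field k]
    [Field E] [Algebra k E] [LinearOrderedCommGroupWithZero Γ₀] (v : Valuation E Γ₀) {f : ℕ}
    (hf : Module.rank k E ≤ f) (c : E) :
    ∃ s : k, v (c ^ f.factorial) = v (algebraMap k E s) := by
  rcases eq_or_ne c 0 with rfl | hc
  · exact ⟨0, by simp [Nat.factorial_ne_zero]⟩
  suffices ∃ d, 0 < d ∧ d ≤ f ∧ ∃ s : k, v (c ^ d) = v (algebraMap k E s) by
    obtain ⟨d, hd0, hdf, s, hs⟩ := this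
    obtain ⟨m, hm⟩ := Nat.dvd_factorial hd0 hdf
    exact ⟨s ^ m, by rw [hm, pow_mul, map_pow, hs, map_pow, map_pow]⟩
  have hdep : ¬LinearIndependent k fun i : Fin (f + 1) => c ^ (i : ℕ) := fun hli => by
    have := hli.cardinal_lift_le_rank.trans (Cardinal.lift_le.mpr hf)
    simp only [Cardinal.mk_fin, Cardinal.lift_natCast, Nat.cast_le] at this
    omega
  obtain ⟨g, hg, i₀, hi₀⟩ := Fintype.not_linearIndependent_iff.mp hdep
  have hv₀ : v (g i₀ • c ^ (i₀ : ℕ)) ≠ 0 := by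
    rw [Valuation.ne_zero_iff, Algebra.smul_def]
    exact mul_ne_zero ((map_ne_zero _).mpr hi₀) (pow_ne_zero _ hc)
  obtain ⟨i, -, j, -, hij, hvi, hv⟩ :=
    v.exists_ne_map_eq_of_sum_eq_zero hg ⟨i₀, Finset.mem_univ _, hv₀⟩
  obtain ⟨a, b, hab, hvb, hvab⟩ : ∃ a b : Fin (f + 1), a < b ∧
      v (g b • c ^ (b : ℕ)) ≠ 0 ∧ v (g a • c ^ (a : ℕ)) = v (g b • c ^ (b : ℕ)) := by
    rcases lt_or_gt_of_ne hij with h | h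
    · exact ⟨i, j, h, hv ▸ hvi, hv⟩
    · exact ⟨j, i, h, hvi, hv.symm⟩
  obtain ⟨d, hd⟩ := Nat.exists_eq_add_of_lt hab
  have hga : algebraMap k E (g a) ≠ 0 := fun h =>
    hvb (by rw [← hvab, Algebra.smul_def, h, zero_mul, map_zero])
  have hgb : algebraMap k E (g b) ≠ 0 := fun h =>
    hvb (by rw [Algebra.smul_def, h, zero_mul, map_zero])
  refine ⟨d + 1, d.succ_pos, by omega, g a / g b, ?_⟩
  calc v (c ^ (d + 1))
      = v (g b • c ^ (b : ℕ)) / v (g a • c ^ (a : ℕ)) * v (algebraMap k E (g a / g b)) := by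
        rw [← map_div₀, ← map_mul, hd]
        congr 1
        simp only [Algebra.smul_def, map_div₀]
        field_simp
        ring
    _ = v (algebraMap k E (g a / g b)) := by rw [hvab, div_self hvb, one_mul]

theorem Ring.inverse_eq_of_mul_eq_one {M₀ : Type*} [CommMonoidWithZero M₀] {a b : M₀}
    (h : a * b = 1) : Ring.inverse a = b := by
  rw [← Ring.inverse_mul_cancel_left a b (.of_mul_eq_one b h), h, mul_one]

theorem Subring.mem_of_pow_mem_of_inverse_mem {K : Type*} [CommRing K] {S : Subring K} {y : K}
    (hy : IsUnit y) {n : ℕ} (hn : n ≠ 0) (hyn : y ^ n ∈ S) (hinv : Ring.inverse y ∈ S) :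
    y ∈ S := by
  obtain ⟨m, rfl⟩ := Nat.exists_eq_succ_of_ne_zero hn
  have : y = y ^ (m + 1) * Ring.inverse y ^ m := by
    rw [pow_succ', mul_assoc, ← mul_pow, Ring.mul_inverse_cancel y hy, one_pow, mul_one]
  rw [this]
  exact S.mul_mem hyn (S.pow_mem hinv m)

open DirectSum

namespace GradedField

variable {H : Type*} [CommGroup H] [DecidableEq H] {K : Type*} [CommRing K] (F : GradedField H K)

theorem nontrivial (F : GradedField H K) : Nontrivial K := ⟨⟨0, 1, F.zero_ne_one⟩⟩

theorem isUnit_of_mem_comp {g : H} {x : K} (hx : x ∈ F.comp g) (hx0 : x ≠ 0) : IsUnit x :=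
  let ⟨y, _, hxy⟩ := F.inv_mem hx hx0
  .of_mul_eq_one y hxy

theorem inverse_mem_comp {g : H} {x : K} (hx : x ∈ F.comp g) : Ring.inverse x ∈ F.comp g⁻¹ := by
  rcases eq_or_ne x 0 with rfl | hx0
  · rw [Ring.inverse_zero]
    exact zero_mem _
  obtain ⟨y, hy, hxy⟩ := F.inv_mem hx hx0
  rwa [Ring.inverse_eq_of_mul_eq_one hxy]

theorem pow_mem_comp {g : H} {x : K} (hx : x ∈ F.comp g) (n : ℕ) : x ^ n ∈ F.comp (g ^ n) := by
  induction n with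
  | zero => simpa using F.one_mem
  | succ n ih => rw [pow_succ, pow_succ]; exact F.mul_mem ih hx

noncomputable instance : Decomposition F.comp := F.isInternal.chooseDecomposition

theorem component_eq_decompose (h : H) (x : K) :
    F.component h x = (DirectSum.decompose F.comp x h : K) := rfl

theorem component_mem (h : H) (x : K) : F.component h x ∈ F.comp h :=
  (DirectSum.decompose F.comp x h).2

theorem component_of_mem_same {g : H} {x : K} (hx : x ∈ F.comp g) : F.component g x = x :=
  decompose_of_mem_same F.comp hx

theorem component_of_mem_ne {g h : H} {x : K} (hx : x ∈ F.comp g) (hgh : g ≠ h) :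
    F.component h x = 0 :=
  decompose_of_mem_ne F.comp hx hgh

def addSubgroupOfComponents (S : H → AddSubgroup K) : AddSubgroup K where
  carrier := {x | ∀ h, F.component h x ∈ S h}
  zero_mem' h := by simp [component_eq_decompose]
  add_mem' hx hy h := by simpa [component_eq_decompose] using add_mem (hx h) (hy h)
  neg_mem' {x} hx h := by
    rw [component_eq_decompose, decompose_neg]
    exact neg_mem (hx h)

theorem mem_addSubgroupOfComponents_iff {S : H → AddSubgroup K} {g : H} {x : K}
    (hx : x ∈ F.comp g) : x ∈ F.addSubgroupOfComponents S ↔ x ∈ S g := by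
  refine ⟨fun h => F.component_of_mem_same hx ▸ h g, fun h k => ?_⟩
  rcases eq_or_ne g k with rfl | hgk
  · rwa [F.component_of_mem_same hx]
  · rw [F.component_of_mem_ne hx hgk]
    exact zero_mem _

theorem isHomogeneous_addSubgroupOfComponents (S : H → AddSubgroup K) :
    SetLike.IsHomogeneous F.comp (F.addSubgroupOfComponents S) := fun h _ hx =>
  (F.mem_addSubgroupOfComponents_iff (F.component_mem h _)).mpr (hx h)

theorem isGradedSubring_iff_isHomogeneous {S : Subring K} :
    F.IsGradedSubring S ↔ SetLike.IsHomogeneous F.comp S := by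
  classical
  constructor
  · intro hS h x hx
    have hle : AddSubgroup.closure {y | y ∈ S ∧ F.Homogeneous y} ≤
        F.addSubgroupOfComponents fun _ => S.toAddSubgroup := by
      rw [AddSubgroup.closure_le]
      rintro y ⟨hyS, g, hy⟩
      exact (F.mem_addSubgroupOfComponents_iff hy).mpr hyS
    exact hle (hS x hx) h
  · intro hS x hx
    rw [← sum_support_decompose F.comp x]
    exact AddSubgroup.sum_mem _ fun h _ =>
      AddSubgroup.subset_closure ⟨hS h hx, h, (DirectSum.decompose F.comp x h).2⟩

def subringOfComponents (S : H → AddSubgroup K) (one_mem : (1 : K) ∈ S 1)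
    (mul_mem : ∀ {g h : H} {x y : K}, x ∈ F.comp g → y ∈ F.comp h → x ∈ S g → y ∈ S h →
      x * y ∈ S (g * h)) : Subring K where
  __ := F.addSubgroupOfComponents S
  one_mem' := (F.mem_addSubgroupOfComponents_iff F.one_mem).mpr one_mem
  mul_mem' {x y} hx hy := by
    classical
    rw [← sum_support_decompose F.comp x, ← sum_support_decompose F.comp y, Finset.sum_mul_sum]
    refine AddSubgroup.sum_mem _ fun g _ =>
      AddSubgroup.sum_mem (F.addSubgroupOfComponents S) fun h _ => ?_
    exact (F.mem_addSubgroupOfComponents_iff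
      (F.mul_mem (F.component_mem g x) (F.component_mem h y))).mpr
      (mul_mem (F.component_mem g x) (F.component_mem h y) (hx g) (hy h))

section PowMemUnitsMul

variable {B R S : Subring K} {n : ℕ} {g h : H} {y z : K}

/-- `y ^ n ∈ B^× · R_{h ^ n}`. -/
def PowMemUnitsMul (B R : Subring K) (n : ℕ) (h : H) (y : K) : Prop :=
  ∃ u ∈ B, (∃ v ∈ B, u * v = 1) ∧ ∃ r ∈ R, r ∈ F.comp (h ^ n) ∧ y ^ n = u * r

variable {F}

theorem powMemUnitsMul_of_mem (hyR : y ∈ R) (hy : y ∈ F.comp h) : F.PowMemUnitsMul B R n h y :=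
  ⟨1, B.one_mem, ⟨1, B.one_mem, mul_one 1⟩, y ^ n, R.pow_mem hyR n, F.pow_mem_comp hy n,
    (one_mul _).symm⟩

theorem powMemUnitsMul_zero (h : H) : F.PowMemUnitsMul B R n h 0 :=
  powMemUnitsMul_of_mem R.zero_mem (zero_mem _)

theorem PowMemUnitsMul.mul (hy : F.PowMemUnitsMul B R n g y)
    (hz : F.PowMemUnitsMul B R n h z) : F.PowMemUnitsMul B R n (g * h) (y * z) := by
  obtain ⟨u, hu, ⟨v, hv, huv⟩, r, hr, hrc, hyr⟩ := hy
  obtain ⟨u', hu', ⟨v', hv', huv'⟩, r', hr', hrc', hzr⟩ := hz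
  refine ⟨u * u', B.mul_mem hu hu', ⟨v * v', B.mul_mem hv hv', ?_⟩, r * r', R.mul_mem hr hr',
    mul_pow g h n ▸ F.mul_mem hrc hrc', by rw [mul_pow, hyr, hzr]; ring⟩
  rw [mul_mul_mul_comm, huv, huv', one_mul]

theorem PowMemUnitsMul.neg (hy : F.PowMemUnitsMul B R n h y) :
    F.PowMemUnitsMul B R n h (-y) := by
  obtain ⟨u, hu, hunit, r, hr, hrc, hyr⟩ := hy
  refine ⟨u, hu, hunit, (-1) ^ n * r, R.mul_mem (R.pow_mem (R.neg_mem R.one_mem) n) hr, ?_,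
    by rw [neg_pow, hyr]; ring⟩
  simpa using F.mul_mem (F.pow_mem_comp (neg_mem F.one_mem) n) hrc

theorem PowMemUnitsMul.add_of_mul_inverse_mem (hB : ∀ t ∈ B, F.PowMemUnitsMul B R n 1 t)
    (hy : F.PowMemUnitsMul B R n h y) (hyu : IsUnit y) (hzy : z * Ring.inverse y ∈ B) :
    F.PowMemUnitsMul B R n h (y + z) := by
  have hyz : y + z = y * (1 + z * Ring.inverse y) := by
    rw [mul_add, mul_one, mul_left_comm, Ring.mul_inverse_cancel y hyu, mul_one]
  simpa [hyz] using hy.mul (hB _ (B.add_mem B.one_mem hzy))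

theorem PowMemUnitsMul.add (hBval : ∀ x ∈ F.oneComponent, x ≠ 0 → x ∈ B ∨ Ring.inverse x ∈ B)
    (hB : ∀ t ∈ B, F.PowMemUnitsMul B R n 1 t) (hyh : y ∈ F.comp h) (hzh : z ∈ F.comp h)
    (hy : F.PowMemUnitsMul B R n h y) (hz : F.PowMemUnitsMul B R n h z) :
    F.PowMemUnitsMul B R n h (y + z) := by
  have := F.nontrivial
  rcases eq_or_ne y 0 with rfl | hy0
  · rwa [zero_add]
  rcases eq_or_ne z 0 with rfl | hz0
  · rwa [add_zero]
  have hyu := F.isUnit_of_mem_comp hyh hy0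
  have hzu := F.isUnit_of_mem_comp hzh hz0
  have hzy : z * Ring.inverse y ∈ F.comp 1 := by
    simpa using F.mul_mem hzh (F.inverse_mem_comp hyh)
  rcases hBval _ hzy (hzu.mul hyu.ringInverse).ne_zero with hzyB | hyzB
  · exact hy.add_of_mul_inverse_mem hB hyu hzyB
  · rw [Ring.mul_inverse_rev, Ring.inverse_inverse hyu] at hyzB
    rw [add_comm]
    exact hz.add_of_mul_inverse_mem hB hzu hyzB

theorem PowMemUnitsMul.of_pow_mem {L : Subring K} (hy : F.PowMemUnitsMul B L n h y)
    (hBS : B ≤ S) (hyS : y ^ n ∈ S) (hSL : S ⊓ L ≤ R) : F.PowMemUnitsMul B R n h y := by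
  obtain ⟨u, hu, ⟨v, hv, huv⟩, m, hm, hmc, hym⟩ := hy
  have hmv : m = v * y ^ n := by rw [hym, ← mul_assoc, mul_comm v, huv, one_mul]
  exact ⟨u, hu, ⟨v, hv, huv⟩, m, hSL ⟨hmv ▸ S.mul_mem (hBS hv) hyS, hm⟩, hmc, hym⟩

end PowMemUnitsMul

noncomputable instance : Field F.oneComponent where
  inv x := ⟨Ring.inverse (x : K),
    F.mem_oneComponent.mpr (inv_one (G := H) ▸ F.inverse_mem_comp x.2)⟩
  exists_pair_ne := ⟨0, 1, fun h => F.zero_ne_one (congrArg Subtype.val h)⟩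
  mul_inv_cancel x hx := Subtype.ext <|
    Ring.mul_inverse_cancel _ (F.isUnit_of_mem_comp x.2 fun h => hx (Subtype.ext h))
  inv_zero := Subtype.ext (Ring.inverse_zero K)
  nnqsmul := _
  qsmul := _

variable {F}

noncomputable def oneComponentValuationSubring {B : Subring K}
    (hBval : ∀ x ∈ F.oneComponent, x ≠ 0 → x ∈ B ∨ Ring.inverse x ∈ B) :
    ValuationSubring F.oneComponent where
  toSubring := B.comap F.oneComponent.subtype
  mem_or_inv_mem' x := by
    rcases eq_or_ne x 0 with rfl | hx
    · exact Or.inl B.zero_mem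
    · exact hBval x x.2 fun h => hx (Subtype.ext h)

noncomputable def oneComponentSubfield {L : Subring K}
    (hL : ∀ x ∈ L, F.Homogeneous x → x ≠ 0 → Ring.inverse x ∈ L) : Subfield F.oneComponent where
  toSubring := L.comap F.oneComponent.subtype
  inv_mem' x hx := by
    rcases eq_or_ne x 0 with rfl | hx0
    · simp
    · exact hL x hx ⟨1, x.2⟩ fun h => hx0 (Subtype.ext h)

theorem rank_oneComponentSubfield {L : Subring K}
    (hL : ∀ x ∈ L, F.Homogeneous x → x ≠ 0 → Ring.inverse x ∈ L) :
    Module.rank (oneComponentSubfield hL) F.oneComponent =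
      Module.rank ↥(F.oneComponent ⊓ L) ↥(F.oneSubmodule L) := by
  let i : ↥(F.oneComponent ⊓ L) → oneComponentSubfield hL := fun x => ⟨⟨x, x.2.1⟩, x.2.2⟩
  have hi : Function.Bijective i :=
    ⟨fun x y h => Subtype.ext
      (congrArg (fun z : oneComponentSubfield hL => ((z : F.oneComponent) : K)) h),
      fun x => ⟨⟨x.1, x.1.2, x.2⟩, rfl⟩⟩
  let j : ↥(F.oneSubmodule L) ≃+ F.oneComponent :=
    { toFun x := ⟨x, x.2⟩
      invFun x := ⟨x, x.2⟩
      left_inv _ := rfl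
      right_inv _ := rfl
      map_add' _ _ := rfl }
  exact (rank_eq_of_equiv_equiv i j hi fun _ _ => rfl).symm

theorem powMemUnitsMul_of_mem_oneComponent {L B : Subring K} (hL : F.IsGradedSubfield L)
    {f : ℕ} (hf : Module.rank ↥(F.oneComponent ⊓ L) ↥(F.oneSubmodule L) ≤ f)
    (hBval : ∀ x ∈ F.oneComponent, x ≠ 0 → x ∈ B ∨ Ring.inverse x ∈ B) {c : K}
    (hc : c ∈ F.comp 1) : F.PowMemUnitsMul B L f.factorial 1 c := by
  let 𝒪 := oneComponentValuationSubring hBval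
  obtain ⟨s, hs⟩ := 𝒪.valuation.exists_map_pow_factorial_eq_map_algebraMap
    ((rank_oneComponentSubfield hL.inv_mem).trans_le hf) ⟨c, hc⟩
  obtain ⟨a, ha⟩ := (𝒪.valuation_eq_iff _ _).mp hs
  have hainv : ((a : 𝒪) : F.oneComponent) * ((a⁻¹ : 𝒪ˣ) : 𝒪) = 1 := by
    rw [← Subring.coe_mul, a.mul_inv]
    rfl
  exact ⟨((a : 𝒪) : F.oneComponent), (a : 𝒪).2, ⟨_, (a⁻¹ : 𝒪ˣ).1.2, congrArg Subtype.val hainv⟩,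
    ((s : F.oneComponent) : K), s.2, (one_pow (M := H) _).symm ▸ s.1.2,
    (congrArg Subtype.val ha).symm⟩

theorem powMemUnitsMul_of_mem_comp {L B : Subring K} (hL : F.IsGradedSubfield L)
    (he : F.valueGroup L hL.inv_mem = F.fullValueGroup) {f : ℕ}
    (hf : Module.rank ↥(F.oneComponent ⊓ L) ↥(F.oneSubmodule L) ≤ f)
    (hBval : ∀ x ∈ F.oneComponent, x ≠ 0 → x ∈ B ∨ Ring.inverse x ∈ B) {h : H} {x : K}
    (hx : x ∈ F.comp h) : F.PowMemUnitsMul B L f.factorial h x := by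
  rcases eq_or_ne x 0 with rfl | hx0
  · exact powMemUnitsMul_zero h
  obtain ⟨l, hl, hl0, hlL⟩ : h ∈ F.valueGroup L hL.inv_mem :=
    he ▸ ⟨x, hx, hx0, Subring.mem_top x⟩
  have hc : x * Ring.inverse l ∈ F.comp 1 := by
    simpa using F.mul_mem hx (F.inverse_mem_comp hl)
  simpa [Ring.inverse_mul_cancel_right l x (F.isUnit_of_mem_comp hl hl0)] using
    (powMemUnitsMul_of_mem_oneComponent hL hf hBval hc).mul (powMemUnitsMul_of_mem hlL hl)

section Extension

variable {B R : Subring K} {n : ℕ}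

variable (F) in
def extensionComponent (hBval : ∀ x ∈ F.oneComponent, x ≠ 0 → x ∈ B ∨ Ring.inverse x ∈ B)
    (hB : ∀ t ∈ B, F.PowMemUnitsMul B R n 1 t) (h : H) : AddSubgroup K where
  carrier := {y | y ∈ F.comp h ∧ F.PowMemUnitsMul B R n h y}
  add_mem' hy hz := ⟨add_mem hy.1 hz.1, hy.2.add hBval hB hy.1 hz.1 hz.2⟩
  zero_mem' := ⟨zero_mem _, powMemUnitsMul_zero h⟩
  neg_mem' hy := ⟨neg_mem hy.1, hy.2.neg⟩

variable (F) in
def extension (hBval : ∀ x ∈ F.oneComponent, x ≠ 0 → x ∈ B ∨ Ring.inverse x ∈ B)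
    (hB : ∀ t ∈ B, F.PowMemUnitsMul B R n 1 t) : Subring K :=
  F.subringOfComponents (F.extensionComponent hBval hB) ⟨F.one_mem, hB 1 B.one_mem⟩
    fun hx hy hxS hyS => ⟨F.mul_mem hx hy, hxS.2.mul hyS.2⟩

variable {hBval : ∀ x ∈ F.oneComponent, x ≠ 0 → x ∈ B ∨ Ring.inverse x ∈ B}
  {hB : ∀ t ∈ B, F.PowMemUnitsMul B R n 1 t}

theorem coe_extension :
    (F.extension hBval hB : Set K) = {x | ∀ h, F.PowMemUnitsMul B R n h (F.component h x)} :=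
  Set.ext fun x => forall_congr' fun h => and_iff_right (F.component_mem h x)

theorem mem_extension_iff {g : H} {y : K} (hy : y ∈ F.comp g) :
    y ∈ F.extension hBval hB ↔ F.PowMemUnitsMul B R n g y :=
  (F.mem_addSubgroupOfComponents_iff hy).trans (and_iff_right hy)

theorem isHomogeneous_extension : SetLike.IsHomogeneous F.comp (F.extension hBval hB) :=
  F.isHomogeneous_addSubgroupOfComponents _

theorem isGradedValRing_extension {L : Subring K} (hR : F.IsGradedValRing L R)
    (hpow : ∀ {h x}, x ∈ F.comp h → F.PowMemUnitsMul B L n h x) :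
    F.IsGradedValRing ⊤ (F.extension hBval hB) := by
  refine ⟨le_top, F.isGradedSubring_iff_isHomogeneous.mpr isHomogeneous_extension, ?_⟩
  rintro x - ⟨h, hx⟩ hx0
  have := F.nontrivial
  obtain ⟨u, hu, ⟨v, hv, huv⟩, m, hmL, hmc, hxm⟩ := hpow hx
  have hmu : IsUnit m :=
    isUnit_of_mul_isUnit_right (hxm ▸ (F.isUnit_of_mem_comp hx hx0).pow n)
  rcases hR.2.2 m hmL ⟨_, hmc⟩ hmu.ne_zero with hmR | hmR
  · exact Or.inl ((mem_extension_iff hx).mpr ⟨u, hu, ⟨v, hv, huv⟩, m, hmR, hmc, hxm⟩)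
  · refine Or.inr ((mem_extension_iff (F.inverse_mem_comp hx)).mpr
      ⟨v, hv, ⟨u, hu, mul_comm u v ▸ huv⟩, Ring.inverse m, hmR, ?_, ?_⟩)
    · simpa [inv_pow] using F.inverse_mem_comp hmc
    · rw [Ring.inverse_pow, hxm, Ring.mul_inverse_rev, Ring.inverse_eq_of_mul_eq_one huv,
        mul_comm]

theorem extension_inf_eq {L : Subring K} (hL : F.IsGradedSubfield L)
    (hR : F.IsGradedValRing L R) (hBR : B ⊓ L ≤ R) (hn : n ≠ 0) :
    F.extension hBval hB ⊓ L = R := by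
  have hhom : SetLike.IsHomogeneous F.comp (F.extension hBval hB ⊓ L) := fun h x hx =>
    ⟨isHomogeneous_extension h hx.1, F.isGradedSubring_iff_isHomogeneous.mp hL.graded h hx.2⟩
  refine AddSubmonoidClass.IsHomogeneous.ext hhom
    (F.isGradedSubring_iff_isHomogeneous.mp hR.2.1) fun g y hy => ?_
  rw [Subring.mem_inf, mem_extension_iff hy]
  refine ⟨fun ⟨⟨u, hu, _, r, hr, hrc, hyr⟩, hyL⟩ => ?_,
    fun hyR => ⟨powMemUnitsMul_of_mem hyR hy, hR.1 hyR⟩⟩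
  rcases eq_or_ne y 0 with rfl | hy0
  · exact R.zero_mem
  have := F.nontrivial
  have hyu := F.isUnit_of_mem_comp hy hy0
  have hru : IsUnit r := isUnit_of_mul_isUnit_right (hyr ▸ hyu.pow n)
  have huL : u ∈ L := by
    rw [show u = y ^ n * Ring.inverse r by rw [hyr, Ring.mul_inverse_cancel_right r u hru]]
    exact L.mul_mem (L.pow_mem hyL n) (hL.inv_mem r (hR.1 hr) ⟨_, hrc⟩ hru.ne_zero)
  have hynR : y ^ n ∈ R := hyr ▸ R.mul_mem (hBR ⟨hu, huL⟩) hr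
  exact (hR.2.2 y hyL ⟨g, hy⟩ hy0).elim id (R.mem_of_pow_mem_of_inverse_mem hyu hn hynR)

theorem extension_inf_oneComponent (hB1 : B ≤ F.oneComponent)
    (hRB : R ⊓ F.oneComponent ≤ B) (hn : n ≠ 0) : F.extension hBval hB ⊓ F.oneComponent = B := by
  refine le_antisymm (fun x ⟨hxA, hx1⟩ => ?_) fun x hxB =>
    ⟨(mem_extension_iff (hB1 hxB)).mpr (hB x hxB), hB1 hxB⟩
  obtain ⟨u, hu, -, r, hr, hrc, hxr⟩ := (mem_extension_iff hx1).mp hxA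
  rcases eq_or_ne x 0 with rfl | hx0
  · exact B.zero_mem
  have hr1 : r ∈ F.oneComponent := F.mem_oneComponent.mpr (by simpa using hrc)
  have hxnB : x ^ n ∈ B := hxr ▸ B.mul_mem hu (hRB ⟨hr, hr1⟩)
  exact (hBval x hx1 hx0).elim id
    (B.mem_of_pow_mem_of_inverse_mem (F.isUnit_of_mem_comp hx1 hx0) hn hxnB)

theorem eq_extension {L A : Subring K}
    (hpow : ∀ {h x}, x ∈ F.comp h → F.PowMemUnitsMul B L n h x)
    (hA : F.IsGradedValRing ⊤ A) (hAL : A ⊓ L = R) (hBA : B ≤ A) (hn : n ≠ 0) :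
    A = F.extension hBval hB := by
  refine AddSubmonoidClass.IsHomogeneous.ext (F.isGradedSubring_iff_isHomogeneous.mp hA.2.1)
    isHomogeneous_extension fun g y hy => ?_
  rw [mem_extension_iff hy]
  refine ⟨fun hyA => (hpow hy).of_pow_mem hBA (A.pow_mem hyA n) hAL.le,
    fun ⟨u, hu, _, r, hr, _, hyr⟩ => ?_⟩
  rcases eq_or_ne y 0 with rfl | hy0
  · exact A.zero_mem
  have hynA : y ^ n ∈ A := hyr ▸ A.mul_mem (hBA hu) ((hAL ▸ inf_le_left : R ≤ A) hr)
  exact (hA.2.2 y trivial ⟨g, hy⟩ hy0).elim id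
    (A.mem_of_pow_mem_of_inverse_mem (F.isUnit_of_mem_comp hy hy0) hn hynA)

end Extension

end GradedField

theorem GradedField.extension_from_oneComponent_general {H : Type*} [CommGroup H] [DecidableEq H]
    {K : Type*} [CommRing K] (F : GradedField H K) (L : Subring K)
    (hL : F.IsGradedSubfield L)
    -- `e_{K/L} = 1`
    (he : F.valueGroup L hL.inv_mem = F.fullValueGroup)
    -- `f = [K₁:L₁]` is finite
    (f : ℕ)
    (hf : Module.rank ↥(F.oneComponent ⊓ L) ↥(F.oneSubmodule L) = f)
    (R : Subring K) (hR : F.IsGradedValRing L R)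
    -- `B` is a valuation ring of `K₁` …
    (B : Subring K) (hB1 : B ≤ F.oneComponent)
    (hBval : ∀ x ∈ F.oneComponent, x ≠ 0 → x ∈ B ∨ Ring.inverse x ∈ B)
    -- … extending `R₁ = R ∩ K₁` …
    (hBext : B ⊓ L = R ⊓ F.oneComponent) :
    ∃ A : Subring K,
      (A : Set K) = {x : K | ∀ h : H, ∃ u ∈ B, (∃ v ∈ B, u * v = 1) ∧
        ∃ r ∈ R, r ∈ F.comp (h ^ Nat.factorial f) ∧
          F.component h x ^ Nat.factorial f = u * r} ∧
      F.IsGradedValRing ⊤ A ∧ A ⊓ L = R ∧ A ⊓ F.oneComponent = B ∧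
      ∀ A' : Subring K,
        F.IsGradedValRing ⊤ A' ∧ A' ⊓ L = R ∧ A' ⊓ F.oneComponent = B → A' = A := by
  have hn : f.factorial ≠ 0 := f.factorial_ne_zero
  have hpow : ∀ {h : H} {x : K}, x ∈ F.comp h → F.PowMemUnitsMul B L f.factorial h x :=
    GradedField.powMemUnitsMul_of_mem_comp hL he hf.le hBval
  have hBR : B ⊓ L ≤ R := hBext.le.trans inf_le_left
  have hB : ∀ t ∈ B, F.PowMemUnitsMul B R f.factorial 1 t := fun t ht =>
    (hpow (hB1 ht)).of_pow_mem le_rfl (B.pow_mem ht _) hBR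
  exact ⟨F.extension hBval hB, GradedField.coe_extension,
    GradedField.isGradedValRing_extension hR hpow, GradedField.extension_inf_eq hL hR hBR hn,
    GradedField.extension_inf_oneComponent hB1 (hBext.ge.trans inf_le_left) hn,
    fun A' ⟨hA', hA'L, hA'B⟩ => GradedField.eq_extension hpow hA' hA'L (hA'B ▸ inf_le_left) hn⟩

/-- Let `K/L` be an extension of `H`-graded fields with `e_{K/L} = 1` and `f = [K₁:L₁]`
finite, `R` a graded valuation ring of `L`, `B` a valuation ring of `K₁` extending
`R₁ = R ∩ K₁` (with local inclusion), and `N = f!`.  Then the set of elements of `K` all of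
whose homogeneous components `y` (of degree `h`) satisfy `y^N ∈ B^× · R_{h^N}` is a graded
valuation ring `A` of `K` with `A ∩ L = R` and `A ∩ K₁ = B`, and it is the unique such
extension of `R` with identity component `B`. -/
theorem GradedField.extension_from_oneComponent {H : Type*} [CommGroup H] [DecidableEq H]
    {K : Type*} [CommRing K] (F : GradedField H K) (L : Subring K)
    (hL : F.IsGradedSubfield L)
    -- `e_{K/L} = 1`
    (he : F.valueGroup L hL.inv_mem = F.fullValueGroup)
    -- `f = [K₁:L₁]` is finite
    (f : ℕ) (hf0 : 0 < f)
    (hf : Module.rank ↥(F.oneComponent ⊓ L) ↥(F.oneSubmodule L) = f)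
    (R : Subring K) (hR : F.IsGradedValRing L R)
    -- `B` is a valuation ring of `K₁` …
    (B : Subring K) (hB1 : B ≤ F.oneComponent)
    (hBval : ∀ x ∈ F.oneComponent, x ≠ 0 → x ∈ B ∨ Ring.inverse x ∈ B)
    -- … extending `R₁ = R ∩ K₁` …
    (hBext : B ⊓ L = R ⊓ F.oneComponent)
    -- … with local inclusion `R₁ → B`
    (hloc : ∀ x ∈ R ⊓ F.oneComponent, (∃ v ∈ B, x * v = 1) →
      ∃ v ∈ R ⊓ F.oneComponent, x * v = 1) :
    ∃ A : Subring K,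
      (A : Set K) = {x : K | ∀ h : H, ∃ u ∈ B, (∃ v ∈ B, u * v = 1) ∧
        ∃ r ∈ R, r ∈ F.comp (h ^ Nat.factorial f) ∧
          F.component h x ^ Nat.factorial f = u * r} ∧
      F.IsGradedValRing ⊤ A ∧ A ⊓ L = R ∧ A ⊓ F.oneComponent = B ∧
      ∀ A' : Subring K,
        F.IsGradedValRing ⊤ A' ∧ A' ⊓ L = R ∧ A' ⊓ F.oneComponent = B → A' = A :=
  GradedField.extension_from_oneComponent_general F L hL he f hf R hR B hB1 hBval hBext
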